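/- arXiv:2502.21050 — 2 statements merged into one kernel-verified Lean document; each statement's English description precedes it below -/
import Mathlib

section
/- For all n ≥ 0, the Hankel determinant det(M_{i+j})_{0≤i,j≤n-1} of the Motzkin numbers equals 1 (with the convention that the empty determinant for n = 0 equals 1). -/
open PowerSeries

noncomputable def motzkin (n : ℕ) : ℚ :=
  ∑ k ∈ Finset.range (n + 1), (n.choose (2 * k) : ℚ) * (catalan k : ℚ)

noncomputable def motzkinPS : PowerSeries ℚ := PowerSeries.mk motzkin

noncomputable def motzkinConv (r n : ℕ) : ℚ := PowerSeries.coeff n (motzkinPS ^ r)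

noncomputable def hankel (a : ℕ → ℚ) (n : ℕ) : ℚ :=
  (Matrix.of fun i j : Fin n => a ((i : ℕ) + (j : ℕ))).det

noncomputable def H (r n : ℕ) : ℚ := hankel (motzkinConv r) n

/-! Write `T n k` for the number of Motzkin paths of length `n` from height `0` to height `k`.
Cutting a Motzkin path of length `i + j` after step `i` gives
`∑ₖ T i k * T j k = T (i + j) 0 = M (i + j)`, so the Hankel matrix is `L * Lᵀ` with
`L = (T i k)` lower unitriangular, and its determinant is `1`. Formally the cutting identity
follows by induction from `T (n + 1) = T n * U`, where the transfer matrix `U` (ones on and next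
to the diagonal) is symmetric. The link with `∑ₖ C(n, 2k) Cat_k` is the closed form
`T n k = ∑ⱼ C(n, k + 2j) B(k, j)`: choose the `k + 2j` non-flat steps, which form a ballot path
counted by `B(k, j) = C(k + 2j, j) - C(k + 2j, k + j + 1)`, and `B(0, j) = Cat_j`. -/

open Finset

lemma hankel_eq_prod_sq_of_eq_sum_mul (a : ℕ → ℚ) (L : ℕ → ℕ → ℚ)
    (hL : ∀ i k, i < k → L i k = 0)
    (ha : ∀ i j, a (i + j) = ∑ k ∈ range (i + 1), L i k * L j k) (n : ℕ) :
    hankel a n = ∏ i ∈ range n, L i i ^ 2 := by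
  set L' : Matrix (Fin n) (Fin n) ℚ := Matrix.of fun i k => L i k
  have hfactor : Matrix.of (fun i j : Fin n => a (i + j)) = L' * L'.transpose := by
    ext i j
    rw [Matrix.of_apply, ha, Matrix.mul_apply, ← eventually_constant_sum (fun k hk => by
      rw [hL i k hk, zero_mul]) (Nat.succ_le_of_lt i.isLt)]
    exact (Fin.sum_univ_eq_sum_range (fun k => L i k * L j k) n).symm
  have hdet : L'.det = ∏ i ∈ range n, L i i :=
    (Matrix.det_of_isLowerTriangular L' fun i k hik => hL i k hik).trans
      (Fin.prod_univ_eq_prod_range (fun i => L i i) n)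
  rw [hankel, hfactor, Matrix.det_mul, Matrix.det_transpose, hdet, ← prod_mul_distrib]
  simp only [sq]

def ballot (k j : ℕ) : ℤ := (k + 2 * j).choose j - (k + 2 * j).choose (k + j + 1)

lemma ballot_zero_right (k : ℕ) : ballot k 0 = 1 := by
  simp [ballot]

lemma ballot_zero_succ (j : ℕ) : ballot 0 (j + 1) = ballot 1 j := by
  rw [ballot, ballot, show 0 + 2 * (j + 1) = 2 * j + 1 + 1 by ring, zero_add,
    Nat.choose_succ_succ' _ j, Nat.choose_succ_succ' _ (j + 1)]
  push_cast
  ring_nf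

lemma ballot_succ_succ (k j : ℕ) :
    ballot (k + 1) (j + 1) = ballot k (j + 1) + ballot (k + 2) j := by
  rw [ballot, ballot, ballot, show k + 1 + 2 * (j + 1) = k + 2 * j + 2 + 1 by ring,
    show k + 1 + (j + 1) + 1 = k + j + 2 + 1 by ring,
    Nat.choose_succ_succ' _ j, Nat.choose_succ_succ' _ (k + j + 2)]
  push_cast
  ring_nf

lemma ballot_zero_left (j : ℕ) : ballot 0 j = catalan j := by
  have hsucc : ((2 * j).choose (j + 1) : ℤ) * (j + 1) = (2 * j).choose j * j := by
    exact_mod_cast (Nat.choose_succ_right_eq (2 * j) j).trans (by rw [two_mul, Nat.add_sub_cancel])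
  have hcat : ((j : ℤ) + 1) * catalan j = (2 * j).choose j := by
    exact_mod_cast (succ_mul_catalan_eq_centralBinom j).trans (Nat.centralBinom_eq_two_mul_choose j)
  refine mul_left_cancel₀ (show (j : ℤ) + 1 ≠ 0 by positivity) ?_
  rw [hcat, ballot, zero_add, zero_add]
  linear_combination -hsucc

def motzkinTriangle (n k : ℕ) : ℤ :=
  ∑ j ∈ range (n + 1), (n.choose (k + 2 * j) : ℤ) * ballot k j

lemma motzkinTriangle_eq_sum_range {n N : ℕ} (k : ℕ) (hN : n + 1 ≤ N) :
    motzkinTriangle n k = ∑ j ∈ range N, (n.choose (k + 2 * j) : ℤ) * ballot k j :=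
  (eventually_constant_sum (fun j hj => by rw [Nat.choose_eq_zero_of_lt (by omega)]; simp) hN).symm

lemma motzkinTriangle_eq_zero_of_lt {n k : ℕ} (h : n < k) : motzkinTriangle n k = 0 :=
  sum_eq_zero fun j _ => by rw [Nat.choose_eq_zero_of_lt (by omega)]; simp

lemma motzkinTriangle_self (n : ℕ) : motzkinTriangle n n = 1 := by
  rw [motzkinTriangle, sum_eq_single_of_mem 0 (by simp)]
  · simp [ballot_zero_right]
  · intro j _ hj
    rw [Nat.choose_eq_zero_of_lt (by omega)]
    simp

lemma motzkinTriangle_succ_zero (n : ℕ) :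
    motzkinTriangle (n + 1) 0 = motzkinTriangle n 0 + motzkinTriangle n 1 := by
  have hpascal : ∀ j, ((n + 1).choose (0 + 2 * (j + 1)) : ℤ) * ballot 0 (j + 1) =
      (n.choose (1 + 2 * j)) * ballot 1 j + (n.choose (0 + 2 * (j + 1))) * ballot 0 (j + 1) := by
    intro j
    rw [show 0 + 2 * (j + 1) = 1 + 2 * j + 1 by ring, Nat.choose_succ_succ', ballot_zero_succ]
    push_cast
    ring
  rw [motzkinTriangle, sum_range_succ', sum_congr rfl fun j _ => hpascal j, sum_add_distrib,
    motzkinTriangle_eq_sum_range 0 (Nat.le_succ _), sum_range_succ' _ (n + 1), motzkinTriangle]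
  simp only [mul_zero, add_zero, Nat.choose_zero_right]
  ring

lemma motzkinTriangle_succ_succ (n k : ℕ) :
    motzkinTriangle (n + 1) (k + 1) =
      motzkinTriangle n k + motzkinTriangle n (k + 1) + motzkinTriangle n (k + 2) := by
  have hpascal : motzkinTriangle (n + 1) (k + 1) =
      ∑ j ∈ range (n + 2), (n.choose (k + 2 * j) : ℤ) * ballot (k + 1) j +
        motzkinTriangle n (k + 1) := by
    rw [motzkinTriangle, motzkinTriangle_eq_sum_range (k + 1) (Nat.le_succ _), ← sum_add_distrib]
    refine sum_congr rfl fun j _ => ?_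
    rw [show k + 1 + 2 * j = k + 2 * j + 1 by ring, Nat.choose_succ_succ']
    push_cast
    ring
  have hballot : ∑ j ∈ range (n + 2), (n.choose (k + 2 * j) : ℤ) * ballot (k + 1) j =
      motzkinTriangle n k + motzkinTriangle n (k + 2) := by
    have hshift : ∀ j, k + 2 * (j + 1) = k + 2 + 2 * j := fun j => by ring
    rw [sum_range_succ', motzkinTriangle_eq_sum_range k (Nat.le_succ _), sum_range_succ' _ (n + 1),
      motzkinTriangle]
    simp only [hshift, ballot_succ_succ, ballot_zero_right]
    simp only [mul_add, sum_add_distrib]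
    ring
  rw [hpascal, hballot]
  ring

lemma sum_range_motzkinTriangle_succ_mul {M i j : ℕ} (hiM : i ≤ M) (hjM : j ≤ M) :
    ∑ k ∈ range (M + 2), motzkinTriangle (i + 1) k * motzkinTriangle j k =
      ∑ k ∈ range (M + 2), motzkinTriangle i k * motzkinTriangle (j + 1) k := by
  have hshift : ∀ f g : ℕ → ℤ, f (M + 2) = 0 →
      ∑ k ∈ range (M + 1), f (k + 2) * g (k + 1) + f 1 * g 0 =
        ∑ k ∈ range (M + 1), f (k + 1) * g k := by
    intro f g hf
    rw [sum_range_succ, hf, zero_mul, add_zero, sum_range_succ' (fun k => f (k + 1) * g k)]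
  have hi := hshift _ (motzkinTriangle j) (motzkinTriangle_eq_zero_of_lt (n := i) (by omega))
  have hj := hshift _ (motzkinTriangle i) (motzkinTriangle_eq_zero_of_lt (n := j) (by omega))
  rw [sum_range_succ', sum_range_succ' (fun k => motzkinTriangle i k * motzkinTriangle (j + 1) k)]
  simp only [motzkinTriangle_succ_succ, motzkinTriangle_succ_zero, add_mul, mul_add,
    sum_add_distrib]
  simp only [mul_comm (motzkinTriangle j _)] at hj
  linear_combination hi - hj

lemma sum_range_motzkinTriangle_mul {N : ℕ} (i j : ℕ) (hN : i + j + 1 < N) :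
    ∑ k ∈ range N, motzkinTriangle i k * motzkinTriangle j k = motzkinTriangle (i + j) 0 := by
  induction i generalizing j with
  | zero =>
    rw [sum_eq_single_of_mem 0 (mem_range.2 (by omega)), motzkinTriangle_self, one_mul, zero_add]
    intro k _ hk
    rw [motzkinTriangle_eq_zero_of_lt (Nat.pos_of_ne_zero hk), zero_mul]
  | succ i ih =>
    obtain ⟨M, rfl⟩ : ∃ M, N = M + 2 := ⟨N - 2, by omega⟩
    rw [sum_range_motzkinTriangle_succ_mul (by omega) (by omega), ih (j + 1) (by omega)]
    ring_nf

lemma sum_motzkinTriangle_mul (i j : ℕ) :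
    ∑ k ∈ range (i + 1), motzkinTriangle i k * motzkinTriangle j k =
      motzkinTriangle (i + j) 0 := by
  rw [← sum_range_motzkinTriangle_mul i j (Nat.lt_succ_self _)]
  exact (eventually_constant_sum (fun k hk => by rw [motzkinTriangle_eq_zero_of_lt hk, zero_mul])
    (by omega)).symm

lemma motzkin_eq_motzkinTriangle (n : ℕ) : motzkin n = motzkinTriangle n 0 := by
  simp [motzkin, motzkinTriangle, ballot_zero_left]

theorem motzkin_hankel (n : ℕ) : hankel motzkin n = 1 := by
  have hfactor (i j : ℕ) : motzkin (i + j) =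
      ∑ k ∈ range (i + 1), (motzkinTriangle i k : ℚ) * motzkinTriangle j k := by
    rw [motzkin_eq_motzkinTriangle]
    exact_mod_cast (sum_motzkinTriangle_mul i j).symm
  have htriangular (i k : ℕ) (h : i < k) : (motzkinTriangle i k : ℚ) = 0 := by
    simp [motzkinTriangle_eq_zero_of_lt h]
  rw [hankel_eq_prod_sq_of_eq_sum_mul motzkin _ htriangular hfactor]
  simp [motzkinTriangle_self]
end

section
/- The generating function F₁ defined by the quadratic equation F₁ = -x(x^3 + 3p(p+1)x − p(p+1)) / (p^2 x^2 F₁ + 2p x^3 + 3p^2 x − p^2), for a positive integer parameter p, is a well-defined formal power series; for p = 1 its Hankel determinants H_k satisfy H_{k+1}(F(x,3)) = H_k(F₁) for all k ≥ 0, where F(x,3) = M(x)^3. -/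
open PowerSeries

/-- The quadratic functional equation satisfied by `F₁⁽ᵖ⁾`:
`p² x² F₁² + (2p x³ + 3p² x − p²) F₁ + x (x³ + 3p(p+1) x − p(p+1)) = 0`. -/
noncomputable def F1eqn (p : ℕ) (F : PowerSeries ℚ) : Prop :=
  PowerSeries.C ((p : ℚ) ^ 2) * X ^ 2 * F ^ 2 +
    (PowerSeries.C (2 * (p : ℚ)) * X ^ 3 + PowerSeries.C (3 * (p : ℚ) ^ 2) * X -
      PowerSeries.C ((p : ℚ) ^ 2)) * F +
    X * (X ^ 3 + PowerSeries.C (3 * (p : ℚ) * ((p : ℚ) + 1)) * X -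
      PowerSeries.C ((p : ℚ) * ((p : ℚ) + 1))) = 0

/-
From `motzkin n = ∑ C(n, 2k) Cat_k`, the Catalan recurrence and the upper Vandermonde identity
`∑_{i+j=m} C(i, r) C(j, s) = C(m+1, r+s+1)` give `M = 1 + xM + x²M²`, i.e. `M (1 - x - x²M) = 1`.
Cubing, `M³ (1 - 3x + 2x³ - x⁶M³) = 1`, which makes `x⁴M³ - (p+1)x/p` a root of the quadratic for
`F₁`. The root is unique among power series because the coefficient of `F₁` has constant term
`-p² ≠ 0` while that of `F₁²` has none. For `p = 1` the identity reads `M³ = 1/(1 - 3x - x²F₁)`.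
For any `A = 1/C` with `C(0) = 1`, left multiplication of the Hankel matrix of `A` by the lower
triangular Toeplitz matrix of `C` clears the first column below the corner and leaves, in the lower
right block, the Hankel matrix of `-[x^{k+2}]C` times a unitriangular Toeplitz matrix; hence
`H_{k+1}(A) = H_k(-[x^{k+2}]C)`.
-/

open Finset
open scoped Matrix

theorem PowerSeries.mk_choose_eq_X_pow_mul_invOneSubPow (r : ℕ) :
    (mk fun n => (n.choose r : ℤ)) = X ^ r * (invOneSubPow ℤ (r + 1)).val := by
  ext n
  rw [coeff_mk, coeff_X_pow_mul', invOneSubPow_val_succ_eq_mk_add_choose]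
  split_ifs with h
  · rw [coeff_mk, Nat.add_sub_cancel' h]
  · rw [Nat.choose_eq_zero_of_lt (not_le.mp h), Nat.cast_zero]

theorem Nat.sum_antidiagonal_choose_mul_choose (r s m : ℕ) :
    ∑ ij ∈ antidiagonal m, ij.1.choose r * ij.2.choose s = (m + 1).choose (r + s + 1) := by
  have hG : X * ((PowerSeries.mk fun n => (n.choose r : ℤ)) * PowerSeries.mk fun n =>
      (n.choose s : ℤ)) = PowerSeries.mk fun n => (n.choose (r + s + 1) : ℤ) := by
    have hu : (invOneSubPow ℤ (r + 1)).val * (invOneSubPow ℤ (s + 1)).val =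
        (invOneSubPow ℤ (r + s + 1 + 1)).val := by
      rw [← Units.val_mul, ← invOneSubPow_add, add_add_add_comm]
      rfl
    simp only [PowerSeries.mk_choose_eq_X_pow_mul_invOneSubPow, ← hu]
    ring
  have h := congrArg (coeff (m + 1)) hG
  rw [coeff_succ_X_mul, coeff_mul, coeff_mk] at h
  simp only [coeff_mk] at h
  exact_mod_cast h

theorem sum_range_sum_range_eq_sum_antidiagonal {M : Type*} [CommSemiring M] {N : ℕ}
    (g : ℕ → M) (h : ℕ → ℕ → M) (hg : ∀ m, N ≤ m → g m = 0) :
    ∑ a ∈ range N, ∑ b ∈ range N, g (a + b) * h a b =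
      ∑ m ∈ range N, g m * ∑ ij ∈ antidiagonal m, h ij.1 ij.2 := by
  have htrunc : ∀ a ∈ range N, ∑ b ∈ range N, g (a + b) * h a b =
      ∑ b ∈ range (N - a), g (a + b) * h a b := fun a _ =>
    (sum_subset (range_subset_range.2 (Nat.sub_le N a)) fun b _ hb => by
      rw [hg _ (by simp only [mem_range] at hb; omega), zero_mul]).symm
  rw [sum_congr rfl htrunc, ← sum_range_diag_flip]
  refine sum_congr rfl fun m _ => ?_
  rw [Nat.sum_antidiagonal_eq_sum_range_succ h, mul_sum]
  refine sum_congr rfl fun k hk => ?_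
  rw [Nat.add_sub_cancel' (Nat.lt_succ_iff.1 (mem_range.1 hk))]

theorem PowerSeries.eq_of_quadratic_eq_zero {R : Type*} [CommRing R] [IsDomain R]
    {a b c F G : R⟦X⟧} (ha : constantCoeff a = 0) (hb : constantCoeff b ≠ 0)
    (hF : a * F ^ 2 + b * F + c = 0) (hG : a * G ^ 2 + b * G + c = 0) : F = G := by
  have hfactor : (F - G) * (a * (F + G) + b) = 0 := by linear_combination hF - hG
  have hunit : a * (F + G) + b ≠ 0 := fun h => hb (by simpa [ha] using congrArg constantCoeff h)
  exact sub_eq_zero.1 ((mul_eq_zero.1 hfactor).resolve_right hunit)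

section Toeplitz

variable {R : Type*} [CommRing R]

def lowerToeplitz (f : ℕ → R) (n : ℕ) : Matrix (Fin n) (Fin n) R :=
  Matrix.of fun i k => if (k : ℕ) ≤ i then f (i - k) else 0

theorem det_lowerToeplitz (f : ℕ → R) (n : ℕ) : (lowerToeplitz f n).det = f 0 ^ n := by
  have hL : (lowerToeplitz f n).IsLowerTriangular := fun i k hik => if_neg (not_le.2 hik)
  rw [Matrix.det_of_isLowerTriangular _ hL]
  simp [lowerToeplitz]

theorem Fin.sum_ite_val_le {N i : ℕ} (hi : i < N) (f : ℕ → R) :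
    ∑ k : Fin N, (if (k : ℕ) ≤ i then f k else 0) = ∑ k ∈ range (i + 1), f k := by
  rw [Fin.sum_univ_eq_sum_range (fun k => if k ≤ i then f k else 0), ← sum_filter]
  congr 1
  ext k
  simp only [mem_filter, mem_range]
  omega

theorem Matrix.det_eq_mul_det_submatrix_succ {n : ℕ} (M : Matrix (Fin (n + 1)) (Fin (n + 1)) R)
    (hM : ∀ i : Fin n, M i.succ 0 = 0) : M.det = M 0 0 * (M.submatrix Fin.succ Fin.succ).det := by
  rw [Matrix.det_succ_column_zero, Fin.sum_univ_succ]
  simp [hM]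

theorem PowerSeries.sum_range_coeff_mul_coeff_add {A C : R⟦X⟧} (hAC : A * C = 1) (i j : ℕ) :
    ∑ k ∈ range (i + 1), coeff (i - k) C * coeff (k + j) A =
      (if i + j = 0 then 1 else 0) - ∑ m ∈ range j, coeff m A * coeff (i + j - m) C := by
  have h := congrArg (coeff (i + j)) hAC
  rw [coeff_mul, Nat.sum_antidiagonal_eq_sum_range_succ_mk, coeff_one, Nat.succ_eq_add_one,
    show i + j + 1 = j + (i + 1) by ring, sum_range_add] at h
  rw [← h, add_sub_cancel_left]
  refine sum_congr rfl fun k _ => ?_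
  rw [mul_comm, add_comm k, show i + j - (j + k) = i - k by omega]

end Toeplitz

theorem hankel_succ_of_mul_eq_one {A C : ℚ⟦X⟧} (hAC : A * C = 1) (hC : constantCoeff C = 1)
    (n : ℕ) : hankel (fun k => coeff k A) (n + 1) = hankel (fun k => -coeff (k + 2) C) n := by
  have hA : constantCoeff A = 1 := by simpa [hC] using congrArg constantCoeff hAC
  set HA : Matrix (Fin (n + 1)) (Fin (n + 1)) ℚ := Matrix.of fun i j => coeff (i + j : ℕ) A
  set HB : Matrix (Fin n) (Fin n) ℚ := Matrix.of fun i j => -coeff (i + j + 2 : ℕ) C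
  set M := lowerToeplitz (fun k => coeff k C) (n + 1) * HA
  have hM : ∀ i j : Fin (n + 1), M i j =
      (if (i : ℕ) + j = 0 then 1 else 0) - ∑ m ∈ range j, coeff m A * coeff (i + j - m : ℕ) C := by
    intro i j
    simp only [M, HA, lowerToeplitz, Matrix.mul_apply, Matrix.of_apply, ite_mul, zero_mul]
    rw [Fin.sum_ite_val_le i.isLt (fun k => coeff (i - k) C * coeff (k + j) A),
      sum_range_coeff_mul_coeff_add hAC]
  have hMsub : M.submatrix Fin.succ Fin.succ = HB * (lowerToeplitz (fun k => coeff k A) n)ᵀ := by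
    ext i j
    simp only [Matrix.submatrix_apply, hM, HB, lowerToeplitz, Matrix.mul_apply, Matrix.of_apply,
      Matrix.transpose_apply, mul_ite, mul_zero]
    rw [Fin.sum_ite_val_le j.isLt (fun l => -coeff (i + l + 2) C * coeff (j - l) A),
      Fin.val_succ, Fin.val_succ, if_neg (by omega), zero_sub, ← sum_neg_distrib,
      ← sum_range_reflect]
    refine sum_congr rfl fun l hl => ?_
    rw [mem_range] at hl
    rw [show (i : ℕ) + 1 + (j + 1) - (j + 1 - 1 - l) = i + l + 2 by omega,
      show (j : ℕ) + 1 - 1 - l = j - l by omega]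
    ring
  calc hankel (fun k => coeff k A) (n + 1) = HA.det := rfl
    _ = M.det := by rw [Matrix.det_mul, det_lowerToeplitz]; simp [hC]
    _ = HB.det := by
      rw [Matrix.det_eq_mul_det_submatrix_succ M fun i => by simp [hM], hMsub, Matrix.det_mul,
        Matrix.det_transpose, det_lowerToeplitz]
      simp [hM, hA]
    _ = hankel (fun k => -coeff (k + 2) C) n := rfl

theorem motzkin_eq_sum_range {n N : ℕ} (h : n ≤ 2 * N) :
    motzkin n = ∑ k ∈ range (N + 1), (n.choose (2 * k) : ℚ) * catalan k := by
  have hext : ∀ K, n ≤ 2 * K → K ≤ n + N →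
      ∑ k ∈ range (K + 1), (n.choose (2 * k) : ℚ) * catalan k =
        ∑ k ∈ range (n + N + 1), (n.choose (2 * k) : ℚ) * catalan k := fun K hK hKN =>
    sum_subset (range_subset_range.2 (by omega)) fun k _ hk => by
      rw [Nat.choose_eq_zero_of_lt (by simp only [mem_range] at hk; omega), Nat.cast_zero, zero_mul]
  exact (hext n (by omega) (by omega)).trans (hext N h (by omega)).symm

theorem motzkin_add_two_sub (n : ℕ) :
    motzkin (n + 2) - motzkin (n + 1) =
      ∑ k ∈ range (n + 1), ((n + 1).choose (2 * k + 1) : ℚ) * catalan (k + 1) := by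
  rw [motzkin_eq_sum_range (N := n + 1) (by omega), motzkin_eq_sum_range (N := n + 1) (by omega),
    sum_range_succ' _ (n + 1), sum_range_succ' _ (n + 1)]
  simp only [Nat.mul_zero, Nat.choose_zero_right]
  rw [add_sub_add_right_eq_sub, ← sum_sub_distrib]
  refine sum_congr rfl fun k _ => ?_
  rw [show 2 * (k + 1) = 2 * k + 1 + 1 by ring, Nat.choose_succ_succ (n + 1)]
  push_cast
  ring

theorem sum_antidiagonal_motzkin_mul_motzkin (n : ℕ) :
    ∑ ij ∈ antidiagonal n, motzkin ij.1 * motzkin ij.2 =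
      ∑ k ∈ range (n + 1), ((n + 1).choose (2 * k + 1) : ℚ) * catalan (k + 1) := by
  calc ∑ ij ∈ antidiagonal n, motzkin ij.1 * motzkin ij.2
      = ∑ ij ∈ antidiagonal n, ∑ a ∈ range (n + 1), ∑ b ∈ range (n + 1),
          ((ij.1.choose (2 * a) * ij.2.choose (2 * b) : ℕ) : ℚ) * (catalan a * catalan b) := by
        refine sum_congr rfl fun ij hij => ?_
        rw [motzkin_eq_sum_range (N := n) (by have := mem_antidiagonal.1 hij; omega),
          motzkin_eq_sum_range (N := n) (by have := mem_antidiagonal.1 hij; omega), sum_mul_sum]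
        refine sum_congr rfl fun a _ => sum_congr rfl fun b _ => ?_
        push_cast
        ring
    _ = ∑ a ∈ range (n + 1), ∑ b ∈ range (n + 1),
          ((n + 1).choose (2 * (a + b) + 1) : ℚ) * (catalan a * catalan b) := by
        rw [sum_comm]
        refine sum_congr rfl fun a _ => ?_
        rw [sum_comm]
        refine sum_congr rfl fun b _ => ?_
        rw [← sum_mul, ← Nat.cast_sum, Nat.sum_antidiagonal_choose_mul_choose, mul_add, add_assoc]
    _ = ∑ m ∈ range (n + 1), ((n + 1).choose (2 * m + 1) : ℚ) *
          ∑ ij ∈ antidiagonal m, (catalan ij.1 * catalan ij.2 : ℚ) :=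
        sum_range_sum_range_eq_sum_antidiagonal (fun m => ((n + 1).choose (2 * m + 1) : ℚ))
          (fun a b => (catalan a * catalan b : ℚ)) fun m hm => by
          rw [Nat.choose_eq_zero_of_lt (by omega), Nat.cast_zero]
    _ = ∑ k ∈ range (n + 1), ((n + 1).choose (2 * k + 1) : ℚ) * catalan (k + 1) := by
        simp only [catalan_succ', Nat.cast_sum, Nat.cast_mul]

theorem motzkinPS_eq : motzkinPS = 1 + X * motzkinPS + X ^ 2 * motzkinPS ^ 2 := by
  ext n
  rcases n with _ | _ | n
  · simp [motzkinPS, motzkin]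
  · simp [motzkinPS, motzkin, coeff_X_pow_mul', sum_range_succ]
  · rw [map_add, map_add, coeff_succ_X_mul, coeff_X_pow_mul', if_pos (by omega),
      show n + 1 + 1 - 2 = n by omega, sq, coeff_mul, coeff_one, if_neg (by omega), zero_add]
    simp only [motzkinPS, coeff_mk]
    rw [sum_antidiagonal_motzkin_mul_motzkin, ← motzkin_add_two_sub]
    ring

theorem motzkinPS_pow_three_mul_eq_one :
    motzkinPS ^ 3 * (1 - 3 * X + 2 * X ^ 3 - X ^ 6 * motzkinPS ^ 3) = 1 := by
  -- with u = 1 - X - X²M, modulo the equation of M: Mu = 1 and u³ = 1 - 3X + 2X³ - X⁶M³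
  linear_combination
    ((motzkinPS * (1 - X - X ^ 2 * motzkinPS)) ^ 2 + motzkinPS * (1 - X - X ^ 2 * motzkinPS) + 1 +
      3 * X ^ 2 * (1 - X) * motzkinPS ^ 3) * motzkinPS_eq

theorem F1eqn_unique {p : ℕ} (hp : p ≠ 0) {F G : ℚ⟦X⟧} (hF : F1eqn p F) (hG : F1eqn p G) :
    F = G :=
  eq_of_quadratic_eq_zero (by simp) (by simp [hp]) hF hG

theorem F1eqn_X_pow_four_mul_motzkinPS_pow_three_sub {p : ℕ} (hp : p ≠ 0) :
    F1eqn p (X ^ 4 * motzkinPS ^ 3 - C (((p : ℚ) + 1) / p) * X) := by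
  have hq : C (p : ℚ) * C (((p : ℚ) + 1) / p) = C (p : ℚ) + 1 := by
    rw [← map_mul, mul_div_cancel₀ _ (Nat.cast_ne_zero.2 hp), map_add, map_one]
  unfold F1eqn
  simp only [map_pow, map_mul, map_add, map_one, map_ofNat]
  set P := C (p : ℚ)
  set Q := C (((p : ℚ) + 1) / p)
  linear_combination (-P ^ 2 * X ^ 4) * motzkinPS_pow_three_mul_eq_one +
    (-2 * P * X ^ 7 * motzkinPS ^ 3 + (P * Q + P - 1) * X ^ 4 - 3 * P * X ^ 2 + P * X) * hq

theorem F1_wellDefined_and_hankel :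
    (∀ p : ℕ, 1 ≤ p → ∃! F : PowerSeries ℚ, F1eqn p F) ∧
    (∀ F : PowerSeries ℚ, F1eqn 1 F →
      ∀ k : ℕ, hankel (fun n => PowerSeries.coeff n (motzkinPS ^ 3)) (k + 1) =
        hankel (fun n => PowerSeries.coeff n F) k) := by
  refine ⟨fun p hp => ⟨_, F1eqn_X_pow_four_mul_motzkinPS_pow_three_sub (by omega), fun G hG =>
    F1eqn_unique (by omega) hG (F1eqn_X_pow_four_mul_motzkinPS_pow_three_sub (by omega))⟩,
    fun F hF k => ?_⟩
  have hFeq : F = X ^ 4 * motzkinPS ^ 3 - 2 * X := by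
    rw [F1eqn_unique one_ne_zero hF (F1eqn_X_pow_four_mul_motzkinPS_pow_three_sub one_ne_zero)]
    norm_num [show C (2 : ℚ) = 2 from map_ofNat C 2]
  have hinv : motzkinPS ^ 3 * (1 - 3 * X - X ^ 2 * F) = 1 := by
    rw [hFeq]
    linear_combination motzkinPS_pow_three_mul_eq_one
  rw [hankel_succ_of_mul_eq_one hinv (by simp)]
  congr 1
  funext n
  simp [coeff_X_pow_mul', ← map_ofNat C 3]
end
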